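/- arXiv:math/0504206 — 2 statements merged into one kernel-verified Lean document; each statement's English description precedes it below -/
import Mathlib

section
/- Let 1 → N → G → Q → 1 be a short exact sequence of groups that splits, i.e., N is a normal subgroup of G with quotient map π : G → Q admitting a group homomorphism s : Q → G with π ∘ s = id. Conjugation by s(q) (for q ∈ Q) preserves N and hence induces an action of Q on the abelianization N^{ab}; let (N^{ab})_Q denote the coinvariants, i.e., the quotient of N^{ab} by the subgroup generated by all elements of the form ā⁻¹·(q·ā) for ā ∈ N^{ab}, q ∈ Q. Then the abelianization of G is isomorphic to the direct product Q^{ab} × (N^{ab})_Q. -/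
namespace Lemma81

variable {G Q : Type} [Group G] [Group Q] (π : G →* Q) (s : Q →* G)
  (hs : π.comp s = MonoidHom.id Q)

include hs in
lemma hq (x : Q) : π (s x) = x := DFunLike.congr_fun hs x

include hs in
def conj (q : Q) (a : π.ker) : π.ker :=
  ⟨s q * (a : G) * (s q)⁻¹, by
    have ha : π (a : G) = 1 := a.2
    simp [MonoidHom.mem_ker, hq π s hs, ha]⟩

include hs in
def R : Subgroup (Abelianization π.ker) :=
  Subgroup.closure {z | ∃ (a : π.ker) (q : Q),
    z = (Abelianization.of a)⁻¹ * Abelianization.of (conj π s hs q a)}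

include hs in
abbrev Coinv := Abelianization π.ker ⧸ R π s hs

include hs in
lemma rel (a : π.ker) (q : Q) :
    (QuotientGroup.mk (Abelianization.of (conj π s hs q a)) : Coinv π s hs) =
      QuotientGroup.mk (Abelianization.of a) := by
  symm
  rw [QuotientGroup.eq]
  exact Subgroup.subset_closure ⟨a, q, rfl⟩

include hs in
def nmap (g : G) : π.ker :=
  ⟨(s (π g))⁻¹ * g, by simp [MonoidHom.mem_ker, hq π s hs]⟩

include hs in
lemma nmap_mul (g h : G) :
    nmap π s hs (g * h) = conj π s hs (π h)⁻¹ (nmap π s hs g) * nmap π s hs h := by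
  apply Subtype.ext
  simp [nmap, conj, mul_assoc]

include hs in
def f₀ : G →* Abelianization Q × Coinv π s hs where
  toFun g := (Abelianization.of (π g),
    QuotientGroup.mk (Abelianization.of (nmap π s hs g)))
  map_one' := by
    have : nmap π s hs 1 = 1 := by apply Subtype.ext; simp [nmap]
    simp [this]
  map_mul' g h := by
    refine Prod.ext (by simp) ?_
    simp only [nmap_mul π s hs g h, map_mul, QuotientGroup.mk_mul, rel π s hs]
    rfl

include hs in
def f : Abelianization G →* Abelianization Q × Coinv π s hs :=
  Abelianization.lift (f₀ π s hs)

def b₁ : Abelianization Q →* Abelianization G :=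
  Abelianization.lift ((Abelianization.of : G →* Abelianization G).comp s)

def b₂' : Abelianization π.ker →* Abelianization G :=
  Abelianization.lift ((Abelianization.of : G →* Abelianization G).comp π.ker.subtype)

include hs in
lemma hb₂ : ∀ x ∈ R π s hs, b₂' π x = 1 := by
  intro x hx
  have : R π s hs ≤ (b₂' π).ker := by
    rw [R, Subgroup.closure_le]
    rintro z ⟨a, q, rfl⟩
    have : (b₂' π) ((Abelianization.of a)⁻¹ * Abelianization.of (conj π s hs q a)) =
        (Abelianization.of (a : G))⁻¹ *
          (Abelianization.of (s q) * Abelianization.of (a : G) *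
            (Abelianization.of (s q))⁻¹) := by
      simp [b₂', conj]
    simp only [SetLike.mem_coe, MonoidHom.mem_ker, this]
    rw [mul_comm (Abelianization.of (s q))]
    simp
  exact this hx

include hs in
def b₂ : Coinv π s hs →* Abelianization G :=
  QuotientGroup.lift _ (b₂' π) (hb₂ π s hs)

include hs in
def b : Abelianization Q × Coinv π s hs →* Abelianization G :=
  (b₁ s).coprod (b₂ π s hs)

include hs in
lemma comp_bf : (b π s hs).comp (f π s hs) = MonoidHom.id _ := by
  apply Abelianization.hom_ext
  ext g
  show (b π s hs) ((f₀ π s hs) g) = Abelianization.of g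
  have : (b π s hs) ((f₀ π s hs) g) =
      Abelianization.of (s (π g)) * Abelianization.of ((nmap π s hs g : G)) := by
    simp [b, f₀, b₁, b₂, b₂']
  rw [this, ← map_mul]
  congr 1
  simp [nmap]

include hs in
lemma comp_fb : (f π s hs).comp (b π s hs) = MonoidHom.id _ := by
  rw [← MonoidHom.coprod_unique ((f π s hs).comp (b π s hs)),
    ← MonoidHom.coprod_unique (MonoidHom.id (Abelianization Q × Coinv π s hs))]
  congr 1
  · apply Abelianization.hom_ext
    refine MonoidHom.ext fun q => ?_
    show (f π s hs) ((b π s hs) (Abelianization.of q, 1)) = (Abelianization.of q, 1)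
    have h1 : (b π s hs) (Abelianization.of q, 1) = Abelianization.of (s q) := by
      simp [b, b₁]
    rw [h1]
    show (f₀ π s hs) (s q) = _
    have h2 : nmap π s hs (s q) = 1 := by
      apply Subtype.ext; simp [nmap, hq π s hs]
    simp [f₀, hq π s hs, h2]
  · apply QuotientGroup.monoidHom_ext
    apply Abelianization.hom_ext
    refine MonoidHom.ext fun a => ?_
    show (f π s hs) ((b π s hs) (1, QuotientGroup.mk (Abelianization.of a))) =
      (1, QuotientGroup.mk (Abelianization.of a))
    have h1 : (b π s hs) (1, QuotientGroup.mk (Abelianization.of a)) =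
        Abelianization.of (a : G) := by
      simp [b, b₂, b₂']
    rw [h1]
    show (f₀ π s hs) (a : G) = _
    have ha : π (a : G) = 1 := a.2
    have h2 : nmap π s hs (a : G) = a := by
      apply Subtype.ext; simp [nmap, ha]
    simp [f₀, ha, h2]

end Lemma81

/-- **Lemma 8.1 (group-theoretic form).** Let `1 → N → G → Q → 1` be a split short exact
sequence of groups: `π : G → Q` is surjective with kernel `N`, and `s : Q → G` is a
homomorphism with `π ∘ s = id`.  Conjugation by `s q` preserves `N = ker π` and induces an
action of `Q` on the abelianization `N^{ab}`; let the coinvariants `(N^{ab})_Q` be the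
quotient of `N^{ab}` by the subgroup generated by all `ā⁻¹ ⬝ (q ⬝ ā)`.  Then
`G^{ab} ≅ Q^{ab} × (N^{ab})_Q`. -/
theorem abelianization_of_split_extension
    {G Q : Type} [Group G] [Group Q] (π : G →* Q) (hπ : Function.Surjective π)
    (s : Q →* G) (hs : π.comp s = MonoidHom.id Q) :
    Nonempty (Abelianization G ≃*
      Abelianization Q ×
        (Abelianization π.ker ⧸ Subgroup.closure
          {z : Abelianization π.ker | ∃ (a : π.ker) (q : Q),
            z = (Abelianization.of a)⁻¹ *
              Abelianization.of (⟨s q * (a : G) * (s q)⁻¹, by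
                have hq : π (s q) = q := DFunLike.congr_fun hs q
                have ha : π (a : G) = 1 := a.2
                simp [MonoidHom.mem_ker, hq, ha]⟩ : π.ker)})) :=
  ⟨MonoidHom.toMulEquiv (Lemma81.f π s hs) (Lemma81.b π s hs)
    (Lemma81.comp_bf π s hs) (Lemma81.comp_fb π s hs)⟩
end

section
/- Let n ≥ 1. Let SO(3) be the group of 3×3 real orthogonal matrices of determinant 1, with its subspace topology, and let ρ : T → SO(3) be the homomorphism sending t ∈ T = ℝ/ℤ to the rotation by angle 2πt about the third coordinate axis (so ρ identifies T with the subgroup SO(2) ⊂ SO(3)). Let T act continuously on SO(3) × Tⁿ by t·(g, x) = (g·ρ(t)⁻¹, x + Δ(t)). Then the orbit space (SO(3) × Tⁿ)/T — that is, SO(3) ×_{SO(2)} SO(2)ⁿ — is homeomorphic to the product SO(3) × (P/Λ). -/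
open Real in
/-- Rotation by angle `2πs` about the third coordinate axis, i.e. the image of
`s ∈ T = ℝ/ℤ` under the standard identification of `T` with `SO(2) ⊂ SO(3)`. -/
noncomputable def rot3 (s : ℝ) : Matrix (Fin 3) (Fin 3) ℝ :=
  !![Real.cos (2 * Real.pi * s), -Real.sin (2 * Real.pi * s), 0;
     Real.sin (2 * Real.pi * s),  Real.cos (2 * Real.pi * s), 0;
     0, 0, 1]

/-- `SO(3)`: real orthogonal `3 × 3` matrices of determinant `1`, topologized as a
subspace of the space of matrices. -/
abbrev SO3 : Type := {A : Matrix (Fin 3) (Fin 3) ℝ // A * A.transpose = 1 ∧ A.det = 1}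

/-- The orbit relation on `SO(3) × Tⁿ` of the circle action
`t • (g, x) = (g ⬝ ρ(t)⁻¹, x + Δ(t))`, where `ρ : T → SO(3)` is rotation about the third
axis and `Δ` is the diagonal; here `Tⁿ = ℝⁿ/ℤⁿ` is modelled as `Fin n → AddCircle 1`,
and (since `ρ(s)` is orthogonal) `b.1 = a.1 ⬝ ρ(s)⁻¹` is written as `a.1 = b.1 ⬝ ρ(s)`. -/
def so3TorusRel (n : ℕ) (a b : SO3 × (Fin n → AddCircle (1 : ℝ))) : Prop :=
  ∃ s : ℝ, (a.1 : Matrix (Fin 3) (Fin 3) ℝ) = (b.1 : Matrix (Fin 3) (Fin 3) ℝ) * rot3 s ∧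
    b.2 = a.2 + fun _ => (s : AddCircle (1 : ℝ))

/-- The relation on the sum-zero hyperplane `P ⊂ ℝⁿ` of translation by the lattice
`Λ = π(ℤⁿ)`, where `π` is orthogonal projection of `ℝⁿ` onto `P`; its quotient is `P/Λ`. -/
def hyperplaneLatticeRel (n : ℕ) (p q : {v : Fin n → ℝ // ∑ i, v i = 0}) : Prop :=
  ∃ m : Fin n → ℤ,
    (q : Fin n → ℝ) = (p : Fin n → ℝ) + fun i => (m i : ℝ) - (∑ j, (m j : ℝ)) / n

/-
Lift everything to `SO(3) × ℝⁿ`. Writing `x = π x + c·(1,…,1)`, the diagonal circle only moves `c`,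
and `(g, x) ↦ g ρ(x₀)` is invariant under it, so the orbit of `(g, x)` is recorded by the pair
`(g ρ(x₀), [π x]) ∈ SO(3) × P/Λ`, and conversely that pair determines the orbit. Thus both sides are
quotients of `SO(3) × ℝⁿ` with the same fibres. The map to `SO(3) × P/Λ` is a quotient map
because `(g, x) ↦ (g ρ(x₀), π x)` has the continuous section `(h, p) ↦ (h ρ(-p₀), p)` and
`P → P/Λ` is open, being the quotient by a group of translations.
-/

open Topology

theorem Topology.IsQuotientMap.nonempty_homeomorph_of_eq_iff {X Y Z : Type*} [TopologicalSpace X]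
    [TopologicalSpace Y] [TopologicalSpace Z] {f : X → Y} {g : X → Z} (hf : IsQuotientMap f)
    (hg : IsQuotientMap g) (hfg : ∀ a b, f a = f b ↔ g a = g b) : Nonempty (Y ≃ₜ Z) := by
  have hf' : IsQuotientMap (⟨f, hf.continuous⟩ : C(X, Y)) := hf
  have hg' : IsQuotientMap (⟨g, hg.continuous⟩ : C(X, Z)) := hg
  have hker : Setoid.ker f = Setoid.ker g := Setoid.ext hfg
  exact ⟨hf'.homeomorph.symm.trans (hker ▸ hg'.homeomorph)⟩

theorem isOpenMap_quot_mk_of_homeomorph {X ι : Type*} [TopologicalSpace X] {r : X → X → Prop}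
    (e : ι → X ≃ₜ X) (hr : ∀ a b, Quot.mk r a = Quot.mk r b ↔ ∃ i, e i a = b) :
    IsOpenMap (Quot.mk r) := by
  intro U hU
  rw [isOpen_coinduced]
  have hsat : Quot.mk r ⁻¹' (Quot.mk r '' U) = ⋃ i, e i '' U := by
    ext b
    simp only [Set.mem_preimage, Set.mem_image, Set.mem_iUnion, hr]
    constructor
    · rintro ⟨a, haU, i, rfl⟩; exact ⟨i, a, haU, rfl⟩
    · rintro ⟨i, a, haU, rfl⟩; exact ⟨a, haU, i, rfl⟩
  rw [hsat]
  exact isOpen_iUnion fun i => (e i).isOpenMap U hU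

theorem AddCircle.coe_eq_coe_iff_exists_zsmul {𝕜 : Type*} [AddCommGroup 𝕜] (p : 𝕜) {a b : 𝕜} :
    (a : AddCircle p) = b ↔ ∃ k : ℤ, a = b + k • p := by
  rw [← sub_eq_zero, ← AddCircle.coe_sub, AddCircle.coe_eq_zero_iff]
  exact exists_congr fun k => by rw [eq_sub_iff_add_eq', eq_comm]

theorem rot3_add (s t : ℝ) : rot3 (s + t) = rot3 s * rot3 t := by
  ext i j
  fin_cases i <;> fin_cases j <;>
    simp [rot3, Matrix.mul_apply, Fin.sum_univ_three, mul_add, Real.cos_add, Real.sin_add] <;> ring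

theorem rot3_zero : rot3 0 = 1 := by
  simp [rot3, Matrix.one_fin_three]

theorem rot3_add_intCast (s : ℝ) (k : ℤ) : rot3 (s + k) = rot3 s := by
  simp only [rot3, mul_add, mul_comm (2 * Real.pi) (k : ℝ), Real.cos_add_int_mul_two_pi,
    Real.sin_add_int_mul_two_pi]

theorem transpose_rot3 (s : ℝ) : (rot3 s).transpose = rot3 (-s) := by
  ext i j
  fin_cases i <;> fin_cases j <;> simp [rot3]

theorem det_rot3 (s : ℝ) : (rot3 s).det = 1 := by
  simp [rot3, Matrix.det_fin_three, ← sq, Real.cos_sq_add_sin_sq]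

theorem continuous_rot3 : Continuous rot3 := by
  refine continuous_matrix fun i j => ?_
  fin_cases i <;> fin_cases j <;> simp [rot3] <;> fun_prop

namespace SO3

noncomputable def mulRot (g : SO3) (s : ℝ) : SO3 :=
  ⟨g.1 * rot3 s, by
    rw [Matrix.transpose_mul, transpose_rot3, Matrix.mul_assoc, ← Matrix.mul_assoc (rot3 s),
      ← rot3_add, add_neg_cancel, rot3_zero, Matrix.one_mul, g.2.1],
    by rw [Matrix.det_mul, det_rot3, g.2.2, mul_one]⟩

@[simp]
theorem coe_mulRot (g : SO3) (s : ℝ) : (g.mulRot s).1 = g.1 * rot3 s := rfl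

@[simp]
theorem mulRot_zero (g : SO3) : g.mulRot 0 = g := by
  ext1
  simp [rot3_zero]

theorem mulRot_mulRot (g : SO3) (s t : ℝ) : (g.mulRot s).mulRot t = g.mulRot (s + t) := by
  ext1
  simp [Matrix.mul_assoc, rot3_add]

theorem continuous_mulRot : Continuous fun z : SO3 × ℝ => z.1.mulRot z.2 :=
  ((continuous_subtype_val.comp continuous_fst).matrix_mul
    (continuous_rot3.comp continuous_snd)).subtype_mk _

end SO3

section Hyperplane

variable {n : ℕ}

/-- The orthogonal projection `π : ℝⁿ → P`; `hyperplaneLattice n` below is `π` on `ℤⁿ`, with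
range `Λ`. -/
noncomputable def sumZeroProj (n : ℕ) : (Fin n → ℝ) →ₗ[ℝ] Fin n → ℝ where
  toFun x i := x i - (∑ j, x j) / n
  map_add' x y := by
    funext i
    simp only [Pi.add_apply, Finset.sum_add_distrib]
    ring
  map_smul' c x := by
    funext i
    simp only [Pi.smul_apply, smul_eq_mul, RingHom.id_apply, ← Finset.mul_sum]
    ring

theorem sumZeroProj_apply (x : Fin n → ℝ) (i : Fin n) :
    sumZeroProj n x i = x i - (∑ j, x j) / n := rfl

theorem sum_sumZeroProj [NeZero n] (x : Fin n → ℝ) : ∑ i, sumZeroProj n x i = 0 := by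
  simp only [sumZeroProj_apply, Finset.sum_sub_distrib, Finset.sum_const, Finset.card_univ,
    Fintype.card_fin, nsmul_eq_mul]
  rw [mul_div_cancel₀ _ (NeZero.ne (n : ℝ)), sub_self]

theorem sumZeroProj_of_sum_eq_zero {x : Fin n → ℝ} (hx : ∑ i, x i = 0) : sumZeroProj n x = x := by
  funext i
  simp [sumZeroProj_apply, hx]

theorem sumZeroProj_eq_zero_iff [NeZero n] {x : Fin n → ℝ} :
    sumZeroProj n x = 0 ↔ ∃ c : ℝ, x = fun _ => c := by
  constructor
  · intro hx
    refine ⟨(∑ j, x j) / n, funext fun i => ?_⟩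
    simpa [sub_eq_zero, sumZeroProj_apply] using congrFun hx i
  · rintro ⟨c, rfl⟩
    funext i
    simp [sumZeroProj_apply, mul_div_cancel_left₀ _ (NeZero.ne (n : ℝ))]

theorem continuous_sumZeroProj : Continuous (sumZeroProj n) :=
  (sumZeroProj n).continuous_of_finiteDimensional

noncomputable def hyperplaneLattice (n : ℕ) : (Fin n → ℤ) →+ Fin n → ℝ :=
  (sumZeroProj n).toAddMonoidHom.comp (AddMonoidHom.compLeft (Int.castAddHom ℝ) (Fin n))

theorem hyperplaneLattice_apply (m : Fin n → ℤ) :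
    hyperplaneLattice n m = sumZeroProj n fun i => (m i : ℝ) := rfl

theorem hyperplaneLatticeRel_iff (p q : {v : Fin n → ℝ // ∑ i, v i = 0}) :
    hyperplaneLatticeRel n p q ↔ ∃ m : Fin n → ℤ, q.1 = p.1 + hyperplaneLattice n m :=
  Iff.rfl

theorem equivalence_hyperplaneLatticeRel : Equivalence (hyperplaneLatticeRel n) := by
  refine ⟨fun p => (hyperplaneLatticeRel_iff p p).2 ⟨0, by simp⟩, fun {p q} h => ?_,
    fun {p q r} h h' => ?_⟩ <;> simp only [hyperplaneLatticeRel_iff] at *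
  · obtain ⟨m, hm⟩ := h
    exact ⟨-m, by rw [hm, map_neg, add_neg_cancel_right]⟩
  · obtain ⟨m, hm⟩ := h
    obtain ⟨m', hm'⟩ := h'
    exact ⟨m + m', by rw [hm', hm, map_add, add_assoc]⟩

variable [NeZero n]

theorem sum_hyperplaneLattice (m : Fin n → ℤ) : ∑ i, hyperplaneLattice n m i = 0 :=
  sum_sumZeroProj _

noncomputable def hyperplaneTranslate (m : Fin n → ℤ) :
    {v : Fin n → ℝ // ∑ i, v i = 0} ≃ₜ {v : Fin n → ℝ // ∑ i, v i = 0} :=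
  (Homeomorph.addRight (hyperplaneLattice n m)).subtype fun x => by
    simp [Finset.sum_add_distrib, sum_hyperplaneLattice]

theorem isOpenQuotientMap_hyperplaneLattice :
    IsOpenQuotientMap (Quot.mk (hyperplaneLatticeRel n)) := by
  refine ⟨Quot.mk_surjective, continuous_quot_mk, isOpenMap_quot_mk_of_homeomorph
    hyperplaneTranslate fun p q => ?_⟩
  rw [equivalence_hyperplaneLatticeRel.quot_mk_eq_iff, hyperplaneLatticeRel_iff]
  simp only [Subtype.ext_iff, eq_comm (a := q.1)]
  rfl

end Hyperplane

theorem equivalence_so3TorusRel (n : ℕ) : Equivalence (so3TorusRel n) where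
  refl a := ⟨0, by simp [rot3_zero], by simp [Pi.zero_def]⟩
  symm := by
    rintro a b ⟨s, hg, hx⟩
    refine ⟨-s, ?_, ?_⟩
    · rw [hg, Matrix.mul_assoc, ← rot3_add, add_neg_cancel, rot3_zero, Matrix.mul_one]
    · rw [hx]
      funext i
      simp
  trans := by
    rintro a b c ⟨s, hg, hx⟩ ⟨t, hg', hx'⟩
    refine ⟨t + s, ?_, ?_⟩
    · rw [hg, hg', Matrix.mul_assoc, ← rot3_add]
    · rw [hx', hx]
      funext i
      simp [add_assoc, add_comm (s : AddCircle (1 : ℝ))]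

section Orbits

variable (n : ℕ)

def torusOrbitMk (z : SO3 × (Fin n → ℝ)) : Quot (so3TorusRel n) :=
  Quot.mk _ (z.1, fun i => (z.2 i : AddCircle (1 : ℝ)))

theorem isQuotientMap_torusOrbitMk : IsQuotientMap (torusOrbitMk n) :=
  isQuotientMap_quot_mk.comp (IsOpenQuotientMap.id.prodMap
    (IsOpenQuotientMap.piMap fun _ => QuotientAddGroup.isOpenQuotientMap_mk)).isQuotientMap

variable {n} in
theorem torusOrbitMk_eq_iff {g h : SO3} {x y : Fin n → ℝ} :
    torusOrbitMk n (g, x) = torusOrbitMk n (h, y) ↔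
      ∃ (s : ℝ) (m : Fin n → ℤ), g.1 = h.1 * rot3 s ∧ y = x + fun i => s + m i := by
  rw [torusOrbitMk, torusOrbitMk, (equivalence_so3TorusRel n).quot_mk_eq_iff]
  refine exists_congr fun s => ?_
  simp only [funext_iff, Pi.add_apply, ← AddCircle.coe_add, AddCircle.coe_eq_coe_iff_exists_zsmul,
    zsmul_one, add_assoc, Classical.skolem (b := fun _ : Fin n => ℤ), exists_and_left]

end Orbits

theorem exists_rot3_translate_iff {n : ℕ} [NeZero n] (A B : Matrix (Fin 3) (Fin 3) ℝ)
    (x y : Fin n → ℝ) :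
    (∃ (s : ℝ) (m : Fin n → ℤ), A = B * rot3 s ∧ y = x + fun i => s + m i) ↔
      A * rot3 (x 0) = B * rot3 (y 0) ∧
        ∃ m : Fin n → ℤ, sumZeroProj n y = sumZeroProj n x + hyperplaneLattice n m := by
  have hsplit (s : ℝ) (m : Fin n → ℤ) :
      (fun i => s + (m i : ℝ)) = (fun _ => s) + fun i => (m i : ℝ) := rfl
  constructor
  · rintro ⟨s, m, rfl, rfl⟩
    refine ⟨?_, m, ?_⟩
    · rw [Pi.add_apply, ← add_assoc, rot3_add_intCast, add_comm, rot3_add, Matrix.mul_assoc]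
    · rw [map_add, hsplit, map_add, sumZeroProj_eq_zero_iff.2 ⟨s, rfl⟩, zero_add,
        hyperplaneLattice_apply]
  · rintro ⟨hrot, m, hm⟩
    obtain ⟨c, hc⟩ : ∃ c : ℝ, y - x - (fun i => (m i : ℝ)) = fun _ => c := by
      rw [← sumZeroProj_eq_zero_iff, map_sub, map_sub, hm, hyperplaneLattice_apply]
      abel
    have hy : y = x + fun i => c + m i := by
      rw [hsplit, ← hc]
      abel
    refine ⟨c, m, ?_, hy⟩
    calc A = A * rot3 (x 0) * rot3 (-x 0) := by
          rw [Matrix.mul_assoc, ← rot3_add, add_neg_cancel, rot3_zero, Matrix.mul_one]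
      _ = B * rot3 (c + m 0) := by
          rw [hrot, Matrix.mul_assoc, ← rot3_add, hy, Pi.add_apply, add_neg_cancel_comm]
      _ = B * rot3 c := by rw [rot3_add_intCast]

section Untwist

variable (n : ℕ) [NeZero n]

noncomputable def untwist (z : SO3 × (Fin n → ℝ)) : SO3 × {v : Fin n → ℝ // ∑ i, v i = 0} :=
  (z.1.mulRot (z.2 0), ⟨sumZeroProj n z.2, sum_sumZeroProj z.2⟩)

noncomputable def untwistMk : SO3 × (Fin n → ℝ) → SO3 × Quot (hyperplaneLatticeRel n) :=
  Prod.map id (Quot.mk _) ∘ untwist n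

theorem isQuotientMap_untwist : IsQuotientMap (untwist n) := by
  refine .of_inverse (f := fun z => (z.1.mulRot (-z.2.1 0), z.2.1)) ?_ ?_ fun z => ?_
  · exact SO3.continuous_mulRot.comp (continuous_fst.prodMk
      ((continuous_apply 0).comp (continuous_subtype_val.comp continuous_snd)).neg)
      |>.prodMk (continuous_subtype_val.comp continuous_snd)
  · exact SO3.continuous_mulRot.comp (continuous_fst.prodMk
      ((continuous_apply 0).comp continuous_snd)) |>.prodMk
      ((continuous_sumZeroProj.comp continuous_snd).subtype_mk _)
  · simp [untwist, SO3.mulRot_mulRot, sumZeroProj_of_sum_eq_zero z.2.2]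

theorem isQuotientMap_untwistMk : IsQuotientMap (untwistMk n) :=
  (IsOpenQuotientMap.id.prodMap isOpenQuotientMap_hyperplaneLattice).isQuotientMap.comp
    (isQuotientMap_untwist n)

variable {n}

theorem untwistMk_eq_iff {g h : SO3} {x y : Fin n → ℝ} :
    untwistMk n (g, x) = untwistMk n (h, y) ↔
      g.1 * rot3 (x 0) = h.1 * rot3 (y 0) ∧
        ∃ m : Fin n → ℤ, sumZeroProj n y = sumZeroProj n x + hyperplaneLattice n m := by
  simp [untwistMk, untwist, Prod.ext_iff, Subtype.ext_iff,
    equivalence_hyperplaneLatticeRel.quot_mk_eq_iff, hyperplaneLatticeRel_iff]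

end Untwist

/-- **Section 11, Proposition.** For `n ≥ 1`, the orbit space
`(SO(3) × Tⁿ)/T = SO(3) ×_{SO(2)} SO(2)ⁿ` of the circle action
`t • (g,x) = (g ρ(t)⁻¹, x + Δ(t))` is homeomorphic to the product `SO(3) × (P/Λ)`. -/
theorem so3_torus_quotient_homeomorph (n : ℕ) (hn : 1 ≤ n) :
    Nonempty (Quot (so3TorusRel n) ≃ₜ SO3 × Quot (hyperplaneLatticeRel n)) := by
  have : NeZero n := ⟨by omega⟩
  refine (isQuotientMap_torusOrbitMk n).nonempty_homeomorph_of_eq_iff (isQuotientMap_untwistMk n)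
    fun ⟨g, x⟩ ⟨h, y⟩ => ?_
  rw [torusOrbitMk_eq_iff, untwistMk_eq_iff, exists_rot3_translate_iff]
end
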